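/- Let H : L² → L² be a map and let Π be a real symmetric 2×2 matrix with entries π₁₁, π₁₂, π₂₂. Then the following are equivalent: (i) for all u₁, u₂ ∈ L², writing Δu = u₁ − u₂ and Δy = Hu₁ − Hu₂, one has π₁₁·‖Δu‖² + 2·π₁₂·⟪Δu, Δy⟫ + π₂₂·‖Δy‖² ≥ 0 (the static incremental soft IQC with multiplier Π ⊗ I); (ii) SRG(H) ⊆ S(Π). -/

import Mathlib

/-!
The SRG point `z₊(u, y)` has real part `⟪u, y⟫ / ‖u‖²` and modulus `‖y‖ / ‖u‖`, so the inequality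
defining `S(Π)` at `z₊(Δu, Δy)` is the IQC inequality divided by `‖Δu‖²`. Since `z₋ = conj z₊` and
`S(Π)` is invariant under conjugation, the points `z₋` impose nothing new.
-/

open scoped RealInnerProductSpace Classical
open MeasureTheory

/-- `L²` : square-integrable signals `[0,∞) → ℝⁿ`, with
`⟪u, v⟫ = ∫₀^∞ u(t)ᵀ v(t) dt`. -/
noncomputable abbrev L2 (n : ℕ) :=
  Lp (EuclideanSpace ℝ (Fin n)) 2 (volume.restrict (Set.Ici (0 : ℝ)))

/-- The region `S(Π)` in the complex plane associated with a real symmetric 2×2 matrix `Π`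
with entries `π₁₁, π₁₂, π₂₂`:  `S(Π) = {z ∈ ℂ : π₁₁ + 2·π₁₂·Re z + π₂₂·|z|² ≥ 0}`. -/
def SRegion (p11 p12 p22 : ℝ) : Set ℂ :=
  {z : ℂ | 0 ≤ p11 + 2 * p12 * z.re + p22 * ‖z‖ ^ 2}

/-- SRG point `z₊(u, y) = (‖y‖/‖u‖)·exp(+i·arccos(⟪u,y⟫/(‖u‖‖y‖)))` (and `0` for `y = 0`). -/
noncomputable def srgPlus {E : Type*} [NormedAddCommGroup E] [InnerProductSpace ℝ E]
    (u y : E) : ℂ :=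
  if y = 0 then 0 else
    ((‖y‖ / ‖u‖ : ℝ) : ℂ) *
      Complex.exp (Complex.I * (Real.arccos (⟪u, y⟫ / (‖u‖ * ‖y‖)) : ℝ))

/-- SRG point `z₋(u, y) = (‖y‖/‖u‖)·exp(−i·arccos(⟪u,y⟫/(‖u‖‖y‖)))` (and `0` for `y = 0`). -/
noncomputable def srgMinus {E : Type*} [NormedAddCommGroup E] [InnerProductSpace ℝ E]
    (u y : E) : ℂ :=
  if y = 0 then 0 else
    ((‖y‖ / ‖u‖ : ℝ) : ℂ) *
      Complex.exp (-Complex.I * (Real.arccos (⟪u, y⟫ / (‖u‖ * ‖y‖)) : ℝ))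

/-- The soft scaled relative graph of a map `H : L² → L²`:
`SRG(H) = ⋃ {z_±(Δu, Δy)}` over all `u₁, u₂ ∈ L²` with `u₁ ≠ u₂`, where
`Δu = u₁ − u₂` and `Δy = Hu₁ − Hu₂`. -/
noncomputable def softSRG {n : ℕ} (H : L2 n → L2 n) : Set ℂ :=
  {z : ℂ | ∃ u₁ u₂ : L2 n, u₁ ≠ u₂ ∧
    (z = srgPlus (u₁ - u₂) (H u₁ - H u₂) ∨ z = srgMinus (u₁ - u₂) (H u₁ - H u₂))}

open ComplexConjugate

section SRGPoints

variable {E : Type*} [NormedAddCommGroup E] [InnerProductSpace ℝ E]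

theorem srgMinus_eq_conj_srgPlus (u y : E) : srgMinus u y = conj (srgPlus u y) := by
  unfold srgMinus srgPlus
  split_ifs
  · simp
  · rw [map_mul, Complex.conj_ofReal, ← Complex.exp_conj, map_mul, Complex.conj_I,
      Complex.conj_ofReal]

theorem norm_srgPlus (u y : E) : ‖srgPlus u y‖ = ‖y‖ / ‖u‖ := by
  unfold srgPlus
  split_ifs with hy
  · simp [hy]
  · rw [norm_mul, mul_comm Complex.I, Complex.norm_exp_ofReal_mul_I, mul_one,
      Complex.norm_of_nonneg (by positivity)]

theorem re_srgPlus (u y : E) : (srgPlus u y).re = ⟪u, y⟫ / ‖u‖ ^ 2 := by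
  unfold srgPlus
  split_ifs with hy
  · simp [hy]
  have hc := abs_le.1 (abs_real_inner_div_norm_mul_norm_le_one u y)
  have hy' : ‖y‖ ≠ 0 := norm_ne_zero_iff.2 hy
  rw [mul_comm Complex.I, Complex.re_ofReal_mul, Complex.exp_ofReal_mul_I_re,
    Real.cos_arccos hc.1 hc.2]
  field_simp

end SRGPoints

theorem conj_mem_SRegion_iff {p11 p12 p22 : ℝ} {z : ℂ} :
    conj z ∈ SRegion p11 p12 p22 ↔ z ∈ SRegion p11 p12 p22 := by
  simp only [SRegion, Set.mem_ofPred_eq, Complex.conj_re, Complex.norm_conj]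

theorem srgPlus_mem_SRegion_iff {E : Type*} [NormedAddCommGroup E] [InnerProductSpace ℝ E]
    {p11 p12 p22 : ℝ} {u : E} (hu : u ≠ 0) (y : E) :
    srgPlus u y ∈ SRegion p11 p12 p22 ↔
      0 ≤ p11 * ‖u‖ ^ 2 + 2 * p12 * ⟪u, y⟫ + p22 * ‖y‖ ^ 2 := by
  have hu' : 0 < ‖u‖ ^ 2 := by positivity
  have hscale : p11 + 2 * p12 * (⟪u, y⟫ / ‖u‖ ^ 2) + p22 * (‖y‖ / ‖u‖) ^ 2 =
      (p11 * ‖u‖ ^ 2 + 2 * p12 * ⟪u, y⟫ + p22 * ‖y‖ ^ 2) / ‖u‖ ^ 2 := by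
    field_simp
  rw [SRegion, Set.mem_ofPred_eq, re_srgPlus, norm_srgPlus, hscale, le_div_iff₀ hu', zero_mul]

/-- A map `H : L² → L²` satisfies the static incremental soft IQC with multiplier `Π ⊗ I`
(`Π` real symmetric 2×2 with entries `π₁₁, π₁₂, π₂₂`) if and only if `SRG(H) ⊆ S(Π)`. -/
theorem static_soft_iqc_iff_srg_subset (n : ℕ) (H : L2 n → L2 n) (p11 p12 p22 : ℝ) :
    (∀ u₁ u₂ : L2 n,
        0 ≤ p11 * ‖u₁ - u₂‖ ^ 2 + 2 * p12 * ⟪u₁ - u₂, H u₁ - H u₂⟫ +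
          p22 * ‖H u₁ - H u₂‖ ^ 2) ↔
      softSRG H ⊆ SRegion p11 p12 p22 := by
  constructor
  · rintro hIQC z ⟨u₁, u₂, hne, rfl | rfl⟩
    · exact (srgPlus_mem_SRegion_iff (sub_ne_zero.2 hne) _).2 (hIQC u₁ u₂)
    · rw [srgMinus_eq_conj_srgPlus, conj_mem_SRegion_iff]
      exact (srgPlus_mem_SRegion_iff (sub_ne_zero.2 hne) _).2 (hIQC u₁ u₂)
  · intro hSRG u₁ u₂
    rcases eq_or_ne u₁ u₂ with rfl | hne
    · simp
    · exact (srgPlus_mem_SRegion_iff (sub_ne_zero.2 hne) _).1 (hSRG ⟨u₁, u₂, hne, .inl rfl⟩)
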